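/- Let H be a complex Hilbert space and d : B(H) → B(H) a derivation that is continuous in the norm topology and leaves invariant nothing extra; then d maps into B(H) and is inner: there exists a ∈ B(H) with d(x) = ax − xa (Sakai–Kadison innerness for B(H), the type I factor case of the paper's Theorem 3.2). -/

import Mathlib

/-!
By Hahn–Banach there are a vector `ξ` and a continuous functional `f` with `f ξ = 1`; let
`θ η = f(·) η` be the rank-one operators through `f`. Since `x ∘ θ η = θ (x η)` and `θ η ξ = η`,
evaluating the Leibniz rule for `d (x ∘ θ η)` at `ξ` gives `a (x η) = d x η + x (a η)` for
`a η := d (θ η) ξ`, that is, `d x = a x - x a`. Continuity of `d` makes `a` bounded.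
-/

namespace ContinuousLinearMap

variable {𝕜 E : Type*} [NontriviallyNormedField 𝕜] [NormedAddCommGroup E] [NormedSpace 𝕜 E]

noncomputable def derivationImplementer (d : (E →L[𝕜] E) →L[𝕜] (E →L[𝕜] E))
    (f : StrongDual 𝕜 E) (ξ : E) : E →L[𝕜] E :=
  (apply 𝕜 E ξ).comp (d.comp (smulRightL 𝕜 E E f))

theorem derivationImplementer_apply (d : (E →L[𝕜] E) →L[𝕜] (E →L[𝕜] E))
    (f : StrongDual 𝕜 E) (ξ η : E) : derivationImplementer d f ξ η = d (f.smulRight η) ξ :=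
  rfl

theorem mul_smulRight (x : E →L[𝕜] E) (f : StrongDual 𝕜 E) (η : E) :
    x * f.smulRight η = f.smulRight (x η) := by
  ext ζ
  simp

theorem derivation_eq_implementer_mul_sub (d : (E →L[𝕜] E) →L[𝕜] (E →L[𝕜] E))
    (hleib : ∀ x y : E →L[𝕜] E, d (x * y) = d x * y + x * d y)
    {f : StrongDual 𝕜 E} {ξ : E} (hf : f ξ = 1) (x : E →L[𝕜] E) :
    d x = derivationImplementer d f ξ * x - x * derivationImplementer d f ξ := by
  ext η
  have hleib_at_ξ := congrArg (· ξ) (hleib x (f.smulRight η))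
  simp only [mul_smulRight, add_apply, mul_apply_eq_comp, smulRight_apply, hf, one_smul]
    at hleib_at_ξ
  simp only [sub_apply, mul_apply_eq_comp, derivationImplementer_apply, hleib_at_ξ]
  abel

theorem exists_derivation_eq_mul_sub [SeparatingDual 𝕜 E]
    (d : (E →L[𝕜] E) →L[𝕜] (E →L[𝕜] E))
    (hleib : ∀ x y : E →L[𝕜] E, d (x * y) = d x * y + x * d y) :
    ∃ a : E →L[𝕜] E, ∀ x : E →L[𝕜] E, d x = a * x - x * a := by
  rcases subsingleton_or_nontrivial E with _ | _
  · exact ⟨0, fun x => Subsingleton.elim _ _⟩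
  obtain ⟨ξ, hξ⟩ := exists_ne (0 : E)
  obtain ⟨f, hf⟩ := SeparatingDual.exists_eq_one (R := 𝕜) hξ
  exact ⟨_, derivation_eq_implementer_mul_sub d hleib hf⟩

end ContinuousLinearMap

theorem stmt_17_general {H : Type*} [NormedAddCommGroup H] [InnerProductSpace ℂ H]
    (d : (H →L[ℂ] H) →ₗ[ℂ] (H →L[ℂ] H)) (hcont : Continuous d)
    (hleib : ∀ x y : H →L[ℂ] H, d (x * y) = d x * y + x * d y) :
    ∃ a : H →L[ℂ] H, ∀ x : H →L[ℂ] H, d x = a * x - x * a :=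
  ContinuousLinearMap.exists_derivation_eq_mul_sub ⟨d, hcont⟩ hleib

/-- Every (norm-continuous) derivation of `B(H)` is inner. -/
theorem stmt_17 {H : Type*} [NormedAddCommGroup H] [InnerProductSpace ℂ H]
    [CompleteSpace H]
    (d : (H →L[ℂ] H) →ₗ[ℂ] (H →L[ℂ] H)) (hcont : Continuous d)
    (hleib : ∀ x y : H →L[ℂ] H, d (x * y) = d x * y + x * d y) :
    ∃ a : H →L[ℂ] H, ∀ x : H →L[ℂ] H, d x = a * x - x * a :=
  stmt_17_general d hcont hleib
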